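/- arXiv:0711.4366 — 6 statements merged into one kernel-verified Lean document; each statement's English description precedes it below -/
import Mathlib

section
/- Let V be an n-dimensional vector space over a division ring K with n ≥ 6, let F₂ ⊂ F₆ be subspaces of V with dim F₂ = 2 and dim F₆ = 6, and let x be a 4-dimensional subspace of V such that dim(x ∩ y) = 2 for every 4-dimensional subspace y with F₂ ⊆ y ⊆ F₆. Then dim(x ∩ F₂) ≠ 1. -/
open Module Submodule

variable {K : Type*} [DivisionRing K] {V : Type*} [AddCommGroup V] [Module K V]
  [FiniteDimensional K V]

/-- Extend a subspace by one dimension inside an ambient subspace. -/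
lemma aux_ext_one (y F : Submodule K V) (hyF : y ≤ F)
    (hlt : finrank K y < finrank K F) :
    ∃ y', y ≤ y' ∧ y' ≤ F ∧ finrank K y' = finrank K y + 1 := by
  have hne : y ≠ F := by
    rintro rfl; exact lt_irrefl _ hlt
  obtain ⟨w, hwF, hwy⟩ := SetLike.exists_of_lt (lt_of_le_of_ne hyF hne)
  have hw0 : w ≠ 0 := fun h => hwy (h ▸ y.zero_mem)
  refine ⟨y ⊔ K ∙ w, le_sup_left, sup_le hyF (by rwa [span_singleton_le_iff_mem]), ?_⟩
  have hinf : y ⊓ (K ∙ w) = ⊥ := by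
    rw [eq_bot_iff]
    rintro z ⟨hz1, hz2⟩
    rcases mem_span_singleton.mp hz2 with ⟨c, rfl⟩
    rcases eq_or_ne c 0 with rfl | hc
    · simp
    · refine absurd ?_ hwy
      have := y.smul_mem c⁻¹ hz1
      rwa [smul_smul, inv_mul_cancel₀ hc, one_smul] at this
  have := Submodule.finrank_sup_add_finrank_inf_eq y (K ∙ w)
  rw [hinf, finrank_bot, finrank_span_singleton hw0, add_zero] at this
  omega

/-- Extend a subspace to a given dimension inside an ambient subspace. -/
lemma aux_ext_to (y F : Submodule K V) (hyF : y ≤ F) (k : ℕ)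
    (h1 : finrank K y ≤ k) (h2 : k ≤ finrank K F) :
    ∃ y', y ≤ y' ∧ y' ≤ F ∧ finrank K y' = k := by
  induction k, h1 using Nat.le_induction with
  | base => exact ⟨y, le_rfl, hyF, rfl⟩
  | succ k hk ih =>
    obtain ⟨z, hyz, hzF, hz⟩ := ih (by omega)
    obtain ⟨y', hzy', hy'F, hy'⟩ := aux_ext_one z F hzF (by omega)
    exact ⟨y', hyz.trans hzy', hy'F, by omega⟩

/-- Extend a subspace by one dimension inside an ambient subspace, avoiding a vector. -/
lemma aux_ext_one_avoid (y F : Submodule K V) (v : V) (hyF : y ≤ F) (hvy : v ∉ y)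
    (hlt : finrank K y + 1 < finrank K F) :
    ∃ y', y ≤ y' ∧ y' ≤ F ∧ finrank K y' = finrank K y + 1 ∧ v ∉ y' := by
  by_cases hvF : v ∈ F
  swap
  · obtain ⟨y', h1, h2, h3⟩ := aux_ext_one y F hyF (by omega)
    exact ⟨y', h1, h2, h3, fun h => hvF (h2 h)⟩
  have hv0 : v ≠ 0 := fun h => hvy (h ▸ y.zero_mem)
  set J : Submodule K V := y ⊔ K ∙ v with hJ
  have hJF : J ≤ F := sup_le hyF (by rwa [span_singleton_le_iff_mem])
  have hJfin : finrank K J ≤ finrank K y + 1 := by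
    have := Submodule.finrank_add_le_finrank_add_finrank y (K ∙ v)
    rw [finrank_span_singleton hv0, ← hJ] at this
    omega
  have hJlt : J < F := by
    refine lt_of_le_of_ne hJF fun h => ?_
    rw [h] at hJfin; omega
  obtain ⟨w, hwF, hwJ⟩ := SetLike.exists_of_lt hJlt
  have hwy : w ∉ y := fun h => hwJ (le_sup_left (a := y) (b := K ∙ v) h)
  have hw0 : w ≠ 0 := fun h => hwy (h ▸ y.zero_mem)
  refine ⟨y ⊔ K ∙ w, le_sup_left, sup_le hyF (by rwa [span_singleton_le_iff_mem]), ?_, ?_⟩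
  · have hinf : y ⊓ (K ∙ w) = ⊥ := by
      rw [eq_bot_iff]
      rintro z ⟨hz1, hz2⟩
      rcases mem_span_singleton.mp hz2 with ⟨c, rfl⟩
      rcases eq_or_ne c 0 with rfl | hc
      · simp
      · refine absurd ?_ hwy
        have := y.smul_mem c⁻¹ hz1
        rwa [smul_smul, inv_mul_cancel₀ hc, one_smul] at this
    have := Submodule.finrank_sup_add_finrank_inf_eq y (K ∙ w)
    rw [hinf, finrank_bot, finrank_span_singleton hw0, add_zero] at this
    omega
  · intro hv
    rcases mem_sup.mp hv with ⟨a, ha, b, hb, hab⟩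
    rcases mem_span_singleton.mp hb with ⟨c, rfl⟩
    rcases eq_or_ne c 0 with rfl | hc
    · exact hvy (by rw [← hab, zero_smul, add_zero]; exact ha)
    · apply hwJ
      have : w = c⁻¹ • (v - a) := by
        rw [← hab]; simp [smul_smul, inv_mul_cancel₀ hc]
      rw [this]
      apply J.smul_mem
      exact sub_mem ((le_sup_right : (K ∙ v) ≤ J) (mem_span_singleton_self v))
        ((le_sup_left : y ≤ J) ha)

theorem stmt_0 (n : ℕ) (hn : 6 ≤ n) (hV : Module.finrank K V = n)
    (F2 F6 x : Submodule K V) (hF : F2 < F6)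
    (h2 : Module.finrank K ↥F2 = 2) (h6 : Module.finrank K ↥F6 = 6)
    (hx : Module.finrank K ↥x = 4)
    (hdist : ∀ y : Submodule K V, Module.finrank K ↥y = 4 → F2 ≤ y → y ≤ F6 →
      Module.finrank K ↥(x ⊓ y) = 2) :
    Module.finrank K ↥(x ⊓ F2) ≠ 1 := by
  intro h1
  have hF26 : F2 ≤ F6 := hF.le
  set W : Submodule K V := x ⊓ F6 with hW
  have hWx : W ≤ x := inf_le_left
  have hWF6 : W ≤ F6 := inf_le_right
  have hWF2 : W ⊓ F2 = x ⊓ F2 := by rw [hW, inf_assoc, inf_eq_right.mpr hF26]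
  have key : ∀ y : Submodule K V, y ≤ F6 → x ⊓ y = W ⊓ y := by
    intro y hy
    rw [hW, inf_assoc, inf_eq_right.mpr hy]
  have hWle4 : finrank K W ≤ 4 := hx ▸ Submodule.finrank_mono hWx
  by_cases hd3 : 3 ≤ finrank K W
  · obtain ⟨U, hU1, hU2, hU3⟩ :=
      aux_ext_to (W ⊓ F2) W inf_le_left 3 (by rw [hWF2, h1]; omega) hd3
    have hUx : U ≤ x := hU2.trans hWx
    have hinfU : F2 ⊓ U = x ⊓ F2 := by
      refine le_antisymm ?_ ?_
      · rw [← hWF2]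
        exact le_inf (inf_le_right.trans hU2) inf_le_left
      · rw [← hWF2]
        exact le_inf inf_le_right hU1
    have hy4 : finrank K ↥(F2 ⊔ U) = 4 := by
      have := Submodule.finrank_sup_add_finrank_inf_eq F2 U
      rw [hinfU, h1, h2, hU3] at this
      omega
    have hcontr := hdist (F2 ⊔ U) hy4 le_sup_left (sup_le hF26 (hU2.trans hWF6))
    have h3le : 3 ≤ finrank K ↥(x ⊓ (F2 ⊔ U)) :=
      hU3 ▸ Submodule.finrank_mono (le_inf hUx le_sup_right)
    omega
  · have hsup4 : finrank K ↥(F2 ⊔ W) ≤ 4 := by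
      have := Submodule.finrank_add_le_finrank_add_finrank F2 W
      omega
    obtain ⟨y, hy1, hy2, hy3⟩ :=
      aux_ext_to (F2 ⊔ W) F6 (sup_le hF26 hWF6) 4 hsup4 (by omega)
    have h := hdist y hy3 (le_sup_left.trans hy1) hy2
    rw [key y hy2, inf_eq_left.mpr (le_sup_right.trans hy1)] at h
    -- now finrank W = 2
    have hWnF2 : ¬ W ≤ F2 := by
      intro hle
      have : W ⊓ F2 = W := inf_eq_left.mpr hle
      rw [← hWF2, this, h] at h1
      omega
    obtain ⟨v, hvW, hvF2⟩ := SetLike.not_le_iff_exists.mp hWnF2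
    obtain ⟨y1, ha1, ha2, ha3, ha4⟩ :=
      aux_ext_one_avoid F2 F6 v hF26 hvF2 (by omega)
    obtain ⟨y2, hb1, hb2, hb3, hb4⟩ :=
      aux_ext_one_avoid y1 F6 v ha2 ha4 (by omega)
    have hd2 := hdist y2 (by omega) (ha1.trans hb1) hb2
    rw [key y2 hb2] at hd2
    have hlt : W ⊓ y2 < W := by
      refine lt_of_le_of_ne inf_le_left fun e => hb4 ?_
      have : v ∈ W ⊓ y2 := e.symm ▸ hvW
      exact this.2
    have := Submodule.finrank_lt_finrank_of_lt hlt
    omega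
end

section
/- Let V be an n-dimensional vector space over a division ring K with n ≥ 6, let F₂ ⊂ F₆ be subspaces with dim F₂ = 2 and dim F₆ = 6, and let x be a 4-dimensional subspace with dim(x ∩ y) = 2 for every 4-dimensional subspace y satisfying F₂ ⊆ y ⊆ F₆. If dim(x ∩ F₂) = 2, then x ∩ F₆ = F₂. -/
open Module Submodule

variable {K : Type*} [DivisionRing K] {V : Type*} [AddCommGroup V] [Module K V]
  [FiniteDimensional K V]

lemma aux_step (p : Submodule K V) {w : V} (hw : w ∉ p) :
    Module.finrank K ↥(p ⊔ Submodule.span K {w}) = Module.finrank K ↥p + 1 := by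
  have hlt : p < p ⊔ Submodule.span K {w} := by
    refine lt_of_le_of_ne le_sup_left fun h => hw ?_
    have : Submodule.span K {w} ≤ p := h ▸ le_sup_right
    exact this (Submodule.mem_span_singleton_self w)
  have h1 : Module.finrank K ↥p < Module.finrank K ↥(p ⊔ Submodule.span K {w}) :=
    Submodule.finrank_lt_finrank_of_lt hlt
  have h2 : Module.finrank K ↥(p ⊔ Submodule.span K {w}) ≤
      Module.finrank K ↥p + Module.finrank K ↥(Submodule.span K {w}) := by
    have := Submodule.finrank_sup_add_finrank_inf_eq p (Submodule.span K {w})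
    omega
  have h3 : Module.finrank K ↥(Submodule.span K ({w} : Set V)) ≤ 1 :=
    finrank_span_le_card _ |>.trans (by simp)
  omega

theorem stmt_1 (n : ℕ) (hn : 6 ≤ n) (hV : Module.finrank K V = n)
    (F2 F6 x : Submodule K V) (hF : F2 < F6)
    (h2 : Module.finrank K ↥F2 = 2) (h6 : Module.finrank K ↥F6 = 6)
    (hx : Module.finrank K ↥x = 4)
    (hdist : ∀ y : Submodule K V, Module.finrank K ↥y = 4 → F2 ≤ y → y ≤ F6 →
      Module.finrank K ↥(x ⊓ y) = 2)
    (hxF2 : Module.finrank K ↥(x ⊓ F2) = 2) :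
    x ⊓ F6 = F2 := by
  -- F2 ≤ x
  have hF2x : F2 ≤ x := by
    have : x ⊓ F2 = F2 := Submodule.eq_of_le_of_finrank_le inf_le_right (by omega)
    exact this ▸ inf_le_left
  have hle : F2 ≤ x ⊓ F6 := le_inf hF2x hF.le
  by_contra hne
  have hnle : ¬ (x ⊓ F6 ≤ F2) := fun h => hne (le_antisymm h hle)
  obtain ⟨w, hw, hwF2⟩ := SetLike.not_le_iff_exists.mp hnle
  set y0 := F2 ⊔ Submodule.span K {w} with hy0
  have hy0dim : Module.finrank K ↥y0 = 3 := by rw [hy0, aux_step F2 hwF2, h2]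
  have hy0F6 : y0 ≤ F6 := sup_le hF.le
    ((Submodule.span_singleton_le_iff_mem w F6).mpr hw.2)
  have hy0x : y0 ≤ x := sup_le hF2x
    ((Submodule.span_singleton_le_iff_mem w x).mpr hw.1)
  have hy0lt : y0 < F6 := lt_of_le_of_ne hy0F6 (fun h => by rw [h, h6] at hy0dim; omega)
  obtain ⟨v, hv, hvy0⟩ := SetLike.exists_of_lt hy0lt
  set y := y0 ⊔ Submodule.span K {v} with hy
  have hydim : Module.finrank K ↥y = 4 := by rw [hy, aux_step y0 hvy0, hy0dim]
  have hyF6 : y ≤ F6 := sup_le hy0F6 ((Submodule.span_singleton_le_iff_mem v F6).mpr hv)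
  have hF2y : F2 ≤ y := le_sup_left.trans le_sup_left
  have := hdist y hydim hF2y hyF6
  have h3 : y0 ≤ x ⊓ y := le_inf hy0x le_sup_left
  have := Submodule.finrank_lt_finrank_of_lt (lt_of_le_of_ne h3
    (fun h => by rw [← h, hy0dim] at this; omega))
  omega
end

section
/- Let V be an n-dimensional vector space over a division ring K with n ≥ 6, let F₂ ⊂ F₆ be subspaces with dim F₂ = 2 and dim F₆ = 6, and let x be a 4-dimensional subspace with dim(x ∩ y) = 2 for every 4-dimensional subspace y satisfying F₂ ⊆ y ⊆ F₆. If x ∩ F₂ = 0, then x ⊆ F₆. -/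
open Module Submodule

variable {K : Type*} [DivisionRing K] {V : Type*} [AddCommGroup V] [Module K V]
  [FiniteDimensional K V]

lemma aux_sup_span (p : Submodule K V) (v : V) (hv : v ∉ p) :
    Module.finrank K ↥(p ⊔ (K ∙ v)) = Module.finrank K ↥p + 1 := by
  have hv0 : v ≠ 0 := fun h => hv (h ▸ p.zero_mem)
  have hinf : p ⊓ (K ∙ v) = ⊥ := by
    rw [eq_bot_iff]
    rintro u ⟨hup, hus⟩
    obtain ⟨a, rfl⟩ := Submodule.mem_span_singleton.mp hus
    rcases eq_or_ne a 0 with rfl | ha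
    · simp
    · refine absurd ?_ hv
      have := p.smul_mem a⁻¹ hup
      rwa [smul_smul, inv_mul_cancel₀ ha, one_smul] at this
  have := Submodule.finrank_sup_add_finrank_inf_eq p (K ∙ v)
  rw [hinf, finrank_bot, finrank_span_singleton hv0] at this
  omega

theorem stmt_2 (n : ℕ) (hn : 6 ≤ n) (hV : Module.finrank K V = n)
    (F2 F6 x : Submodule K V) (hF : F2 < F6)
    (h2 : Module.finrank K ↥F2 = 2) (h6 : Module.finrank K ↥F6 = 6)
    (hx : Module.finrank K ↥x = 4)
    (hdist : ∀ y : Submodule K V, Module.finrank K ↥y = 4 → F2 ≤ y → y ≤ F6 →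
      Module.finrank K ↥(x ⊓ y) = 2)
    (hxF2 : x ⊓ F2 = ⊥) :
    x ≤ F6 := by
  set W := x ⊓ F6 with hW
  have hWx : W ≤ x := inf_le_left
  have hWF6 : W ≤ F6 := inf_le_right
  have hWF2 : W ⊓ F2 = ⊥ := by
    rw [eq_bot_iff, ← hxF2]
    exact inf_le_inf_right F2 hWx
  -- It suffices to show finrank W = 4
  by_contra hxle
  have hWlt : W < x := lt_of_le_of_ne hWx (fun h => hxle (h ▸ hWF6))
  have hWrank : Module.finrank K ↥W ≤ 3 := by
    have := Submodule.finrank_lt_finrank_of_lt hWlt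
    omega
  -- pick v ∈ F6 \ (W ⊔ F2)
  have hsup_le : W ⊔ F2 ≤ F6 := sup_le hWF6 hF.le
  have hsup_rank : Module.finrank K ↥(W ⊔ F2) ≤ 5 := by
    have := Submodule.finrank_sup_add_finrank_inf_eq W F2
    rw [hWF2, finrank_bot] at this
    omega
  have hsup_lt : W ⊔ F2 < F6 :=
    lt_of_le_of_ne hsup_le (fun h => by rw [h, h6] at hsup_rank; omega)
  obtain ⟨v, hvF6, hv⟩ := SetLike.exists_of_lt hsup_lt
  have hvF2 : v ∉ F2 := fun h => hv (le_sup_right (α := Submodule K V) h)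
  -- choose w
  have key : ∃ w : V, w ∈ F6 ∧ w ∉ F2 ⊔ (K ∙ v) ∧ W ⊓ (F2 ⊔ (K ∙ v) ⊔ (K ∙ w)) ≤ (K ∙ w) := by
    rcases eq_or_ne W ⊥ with hWbot | hWbot
    · have hr : Module.finrank K ↥(F2 ⊔ (K ∙ v)) = 3 := by
        rw [aux_sup_span F2 v hvF2, h2]
      have hle : F2 ⊔ (K ∙ v) ≤ F6 := sup_le hF.le ((Submodule.span_singleton_le_iff_mem v F6).mpr hvF6)
      have hlt : F2 ⊔ (K ∙ v) < F6 := lt_of_le_of_ne hle (fun h => by rw [h, h6] at hr; omega)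
      obtain ⟨w, hwF6, hw⟩ := SetLike.exists_of_lt hlt
      exact ⟨w, hwF6, hw, by rw [hWbot]; simp⟩
    · obtain ⟨w, hwW, hw0⟩ := Submodule.exists_mem_ne_zero_of_ne_bot hWbot
      have hwF6 : w ∈ F6 := hWF6 hwW
      have hwns : w ∉ F2 ⊔ (K ∙ v) := by
        intro h
        obtain ⟨f, hf, s, hs, hfs⟩ := Submodule.mem_sup.mp h
        obtain ⟨a, rfl⟩ := Submodule.mem_span_singleton.mp hs
        rcases eq_or_ne a 0 with rfl | ha
        · simp only [zero_smul, add_zero] at hfs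
          have : w ∈ W ⊓ F2 := ⟨hwW, hfs ▸ hf⟩
          rw [hWF2] at this
          exact hw0 this
        · apply hv
          have : v = a⁻¹ • (w - f) := by
            rw [← hfs]; simp [ha]
          rw [this]
          exact Submodule.smul_mem _ _ (Submodule.sub_mem _ (le_sup_left (α := Submodule K V) hwW)
            (le_sup_right (α := Submodule K V) hf))
      refine ⟨w, hwF6, hwns, ?_⟩
      rintro u ⟨huW, huy⟩
      obtain ⟨t, ht, s, hs, hts⟩ := Submodule.mem_sup.mp huy
      obtain ⟨f, hf, s', hs', hfs'⟩ := Submodule.mem_sup.mp ht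
      obtain ⟨a, rfl⟩ := Submodule.mem_span_singleton.mp hs'
      obtain ⟨b, rfl⟩ := Submodule.mem_span_singleton.mp hs
      -- u = f + a•v + b•w
      rcases eq_or_ne a 0 with rfl | ha
      · simp only [zero_smul, add_zero] at hfs'
        have : u - b • w ∈ W ⊓ F2 := ⟨W.sub_mem huW (W.smul_mem b hwW), by
          rw [← hts, ← hfs']; simpa using hf⟩
        rw [hWF2, Submodule.mem_bot] at this
        rw [sub_eq_zero] at this
        rw [this]
        exact Submodule.mem_span_singleton.mpr ⟨b, rfl⟩
      · exfalso
        apply hv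
        have : v = a⁻¹ • (u - b • w - f) := by
          have : u - b • w - f = a • v := by
            rw [← hts, ← hfs']; abel
          rw [this]; simp [ha]
        rw [this]
        exact Submodule.smul_mem _ _ (Submodule.sub_mem _
          (le_sup_left (α := Submodule K V) (W.sub_mem huW (W.smul_mem b hwW)))
          (le_sup_right (α := Submodule K V) hf))
  obtain ⟨w, hwF6, hwns, hWy⟩ := key
  set y := F2 ⊔ (K ∙ v) ⊔ (K ∙ w) with hy
  have hw0 : w ≠ 0 := fun h => hwns (h ▸ (F2 ⊔ (K ∙ v)).zero_mem)
  have hy4 : Module.finrank K ↥y = 4 := by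
    rw [hy, aux_sup_span _ w hwns, aux_sup_span F2 v hvF2, h2]
  have hyF2 : F2 ≤ y := le_trans le_sup_left le_sup_left
  have hyF6 : y ≤ F6 := sup_le (sup_le hF.le
    ((Submodule.span_singleton_le_iff_mem v F6).mpr hvF6))
    ((Submodule.span_singleton_le_iff_mem w F6).mpr hwF6)
  have hd := hdist y hy4 hyF2 hyF6
  have hxy : x ⊓ y = W ⊓ y := by
    rw [hW, inf_assoc, inf_eq_right.mpr hyF6]
  rw [hxy] at hd
  have : Module.finrank K ↥(W ⊓ y) ≤ 1 := by
    calc Module.finrank K ↥(W ⊓ y) ≤ Module.finrank K ↥(K ∙ w) :=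
          Submodule.finrank_mono hWy
      _ = 1 := finrank_span_singleton hw0
  omega
end

section
/- Let V be an n-dimensional vector space over a division ring K with n ≥ 6, and let F₂ ⊂ F₆ be subspaces with dim F₂ = 2, dim F₆ = 6. Let F_B be a 3-dimensional subspace of V. If there exists a 4-dimensional subspace y with F₂ ⊆ y ⊆ F₆ and F_B ⊆ y, then dim(F₂ ∩ F_B) ∈ {1, 2}; moreover the set of such y contains more than one element if and only if F₂ ⊆ F_B ⊆ F₆. -/
open Module Submodule

variable {K : Type*} [DivisionRing K] {V : Type*} [AddCommGroup V] [Module K V]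
  [FiniteDimensional K V]

private lemma aux_sup_rank (p : Submodule K V) (v : V) (hv : v ∉ p) :
    Module.finrank K ↥(p ⊔ K ∙ v) = Module.finrank K ↥p + 1 := by
  have hv0 : v ≠ 0 := fun h => hv (h ▸ p.zero_mem)
  have hinf : p ⊓ (K ∙ v) = ⊥ := by
    rw [eq_bot_iff]
    rintro x ⟨hx1, hx2⟩
    obtain ⟨c, rfl⟩ := Submodule.mem_span_singleton.mp hx2
    rcases eq_or_ne c 0 with rfl | hc
    · simp
    · exact absurd (by simpa [smul_smul, inv_mul_cancel₀ hc] using p.smul_mem c⁻¹ hx1) hv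
  have key := Submodule.finrank_sup_add_finrank_inf_eq p (K ∙ v)
  rw [hinf, finrank_bot, finrank_span_singleton hv0] at key
  omega

theorem stmt_7 (n : ℕ) (hn : 6 ≤ n) (hV : Module.finrank K V = n)
    (F2 F6 FB : Submodule K V) (hF : F2 < F6)
    (h2 : Module.finrank K ↥F2 = 2) (h6 : Module.finrank K ↥F6 = 6)
    (hB : Module.finrank K ↥FB = 3)
    (hy : ∃ y : Submodule K V, Module.finrank K ↥y = 4 ∧ F2 ≤ y ∧ y ≤ F6 ∧ FB ≤ y) :
    (Module.finrank K ↥(F2 ⊓ FB) = 1 ∨ Module.finrank K ↥(F2 ⊓ FB) = 2) ∧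
    ({y : Submodule K V | Module.finrank K ↥y = 4 ∧ F2 ≤ y ∧ y ≤ F6 ∧ FB ≤ y}.Nontrivial ↔
      (F2 ≤ FB ∧ FB ≤ F6)) := by
  obtain ⟨y, hy4, h2y, hy6, hBy⟩ := hy
  have key := Submodule.finrank_sup_add_finrank_inf_eq F2 FB
  rw [h2, hB] at key
  have hsup : F2 ⊔ FB ≤ y := sup_le h2y hBy
  have h1 : finrank K ↥(F2 ⊔ FB) ≤ 4 := hy4 ▸ Submodule.finrank_mono hsup
  have hinf2 : finrank K ↥(F2 ⊓ FB) ≤ 2 := h2 ▸ Submodule.finrank_mono inf_le_left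
  constructor
  · omega
  constructor
  · rintro ⟨y1, ⟨hy14, h2y1, hy16, hBy1⟩, y2, ⟨hy24, h2y2, hy26, hBy2⟩, hne⟩
    have key12 := Submodule.finrank_sup_add_finrank_inf_eq y1 y2
    rw [hy14, hy24] at key12
    have hs : finrank K ↥(y1 ⊔ y2) ≤ 6 := h6 ▸ Submodule.finrank_mono (sup_le hy16 hy26)
    have hle3 : finrank K ↥(y1 ⊓ y2) ≤ 3 := by
      by_contra h
      push_neg at h
      have h4 : finrank K ↥(y1 ⊓ y2) = 4 := le_antisymm (hy14 ▸ Submodule.finrank_mono inf_le_left) h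
      have e1 : y1 ⊓ y2 = y1 := eq_of_le_of_finrank_eq inf_le_left (by rw [h4, hy14])
      have e2 : y1 ⊓ y2 = y2 := eq_of_le_of_finrank_eq inf_le_right (by rw [h4, hy24])
      exact hne (e1 ▸ e2)
    have hsup12 : F2 ⊔ FB ≤ y1 ⊓ y2 := le_inf (sup_le h2y1 hBy1) (sup_le h2y2 hBy2)
    have h3 : finrank K ↥(F2 ⊔ FB) ≤ 3 := le_trans (Submodule.finrank_mono hsup12) hle3
    have hinfeq : finrank K ↥(F2 ⊓ FB) = 2 := by omega
    have : F2 ⊓ FB = F2 := eq_of_le_of_finrank_eq inf_le_left (by rw [hinfeq, h2])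
    exact ⟨this ▸ inf_le_right, le_trans hBy1 hy16⟩
  · rintro ⟨h2B, hB6⟩
    have hBF6 : FB < F6 := lt_of_le_of_ne (le_trans hBy hy6) (fun h => by rw [h, h6] at hB; omega)
    obtain ⟨v1, hv1F6, hv1B⟩ := SetLike.exists_of_lt hBF6
    set y1 := FB ⊔ (K ∙ v1) with hy1def
    have hy1rank : finrank K ↥y1 = 4 := by rw [aux_sup_rank FB v1 hv1B, hB]
    have hy1F6 : y1 ≤ F6 := sup_le hBF6.le (Submodule.span_le.mpr (by simpa using hv1F6))
    have hy1lt : y1 < F6 := lt_of_le_of_ne hy1F6 (fun h => by rw [h, h6] at hy1rank; omega)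
    obtain ⟨v2, hv2F6, hv2y1⟩ := SetLike.exists_of_lt hy1lt
    have hv2B : v2 ∉ FB := fun h => hv2y1 (le_sup_left (a := FB) (b := K ∙ v1) h)
    set y2 := FB ⊔ (K ∙ v2) with hy2def
    have hy2rank : finrank K ↥y2 = 4 := by rw [aux_sup_rank FB v2 hv2B, hB]
    have hy2F6 : y2 ≤ F6 := sup_le hBF6.le (Submodule.span_le.mpr (by simpa using hv2F6))
    refine ⟨y1, ⟨hy1rank, le_trans h2B le_sup_left, hy1F6, le_sup_left⟩,
      y2, ⟨hy2rank, le_trans h2B le_sup_left, hy2F6, le_sup_left⟩, ?_⟩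
    intro h
    exact hv2y1 (h ▸ (le_sup_right (a := FB) (Submodule.mem_span_singleton_self v2)))
end

section
/- Let V be an n-dimensional vector space over a division ring K with n > 6, let F₂ ⊂ F₆ with dim F₂ = 2, dim F₆ = 6, and let F'₂ ⊂ F'₆ be another flag with dim F'₂ = 2, dim F'₆ = 6. Let x be a 4-dimensional subspace with x ∩ F₂ = 0, x ⊆ F₆, and dim(x ∩ F'₂) = 1. Then the set of 4-dimensional subspaces y with F'₂ ⊆ y ⊆ span(F'₂, x) equals the set of 4-subspaces y with F'₂ ⊆ y ⊆ F'₆ and dim(x ∩ y) = 3, provided span(F'₂, x) ⊆ F'₆ and dim span(F'₂, x) = 5. -/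
open Module Submodule

variable {K : Type*} [DivisionRing K] {V : Type*} [AddCommGroup V] [Module K V]
  [FiniteDimensional K V]

theorem stmt_10 (n : ℕ) (hn : 6 < n) (hV : Module.finrank K V = n)
    (F2 F6 F2' F6' x : Submodule K V) (hF : F2 < F6) (hF' : F2' < F6')
    (h2 : Module.finrank K ↥F2 = 2) (h6 : Module.finrank K ↥F6 = 6)
    (h2' : Module.finrank K ↥F2' = 2) (h6' : Module.finrank K ↥F6' = 6)
    (hx : Module.finrank K ↥x = 4) (hxF2 : x ⊓ F2 = ⊥) (hxF6 : x ≤ F6)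
    (hxF2' : Module.finrank K ↥(x ⊓ F2') = 1)
    (hsub : F2' ⊔ x ≤ F6') (hdim : Module.finrank K ↥(F2' ⊔ x) = 5) :
    {y : Submodule K V | Module.finrank K ↥y = 4 ∧ F2' ≤ y ∧ y ≤ F2' ⊔ x} =
      {y : Submodule K V | Module.finrank K ↥y = 4 ∧ F2' ≤ y ∧ y ≤ F6' ∧
        Module.finrank K ↥(x ⊓ y) = 3} := by
  ext y
  simp only [Set.mem_setOf_eq]
  constructor
  · rintro ⟨hy4, hF2y, hyle⟩
    refine ⟨hy4, hF2y, hyle.trans hsub, ?_⟩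
    have hsup : x ⊔ y = F2' ⊔ x := by
      apply le_antisymm
      · exact sup_le (le_sup_right) hyle
      · exact sup_le (hF2y.trans le_sup_right) le_sup_left
    have hd := Submodule.finrank_sup_add_finrank_inf_eq x y
    rw [hsup, hdim, hx, hy4] at hd
    omega
  · rintro ⟨hy4, hF2y, hyF6', hxy3⟩
    refine ⟨hy4, hF2y, ?_⟩
    have hle : F2' ⊔ x ≤ x ⊔ y := sup_le (hF2y.trans le_sup_right) le_sup_left
    have hd := Submodule.finrank_sup_add_finrank_inf_eq x y
    rw [hx, hy4, hxy3] at hd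
    have heq : F2' ⊔ x = x ⊔ y := by
      apply Submodule.eq_of_le_of_finrank_le hle
      omega
    calc y ≤ x ⊔ y := le_sup_right
      _ = F2' ⊔ x := heq.symm
end

section
/- Let D be a diagram over a finite index set I, K ⊆ I with |K| > 3, J = I \ K, and let Γ be a locally truncated geometry over K with diagram D. Suppose Σ is a sheaf defined on the family ℱ₂ of nonempty flags of Γ of rank at most two, with typeset I, satisfying _J Σ(F) = Res_Γ(F) for each F ∈ ℱ₂. Then Σ extends to a sheaf Σ' with typeset I defined over the family ℱ of all nonempty flags of Γ, with _J Σ'(F) = Res_Γ(F) for all F ∈ ℱ; moreover Σ'(F) = Res_{Σ(x)}(F \ {x}) is independent of the choice of x ∈ F. -/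
/-- An incidence geometry over the typeset `I`, with objects drawn from an ambient
type `U`: a set of objects, a reflexive symmetric incidence relation and a type map. -/
structure IncGeom (U : Type*) (I : Type*) where
  O : Set U
  inc : U → U → Prop
  t : U → I
  inc_symm : ∀ x y, inc x y → inc y x
  inc_refl : ∀ x, inc x x

namespace IncGeom

variable {U : Type*} {I : Type*} (Γ : IncGeom U I)

/-- A flag: a set of pairwise incident objects. -/
def IsFlag (F : Set U) : Prop :=
  F ⊆ Γ.O ∧ ∀ x ∈ F, ∀ y ∈ F, Γ.inc x y

/-- The residue of a flag `F`: the objects outside `F` incident with every member of `F`. -/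
def Res (F : Set U) : IncGeom U I :=
  ⟨{x | x ∈ Γ.O ∧ x ∉ F ∧ ∀ f ∈ F, Γ.inc x f}, Γ.inc, Γ.t, Γ.inc_symm, Γ.inc_refl⟩

/-- The `J`-truncation: discard all objects whose type lies in `J`. -/
def Trunc (J : Set I) : IncGeom U I :=
  ⟨{x | x ∈ Γ.O ∧ Γ.t x ∉ J}, Γ.inc, Γ.t, Γ.inc_symm, Γ.inc_refl⟩

/-- Equality of geometries (as sub-geometries of the ambient type `U`). -/
def geomEq (G H : IncGeom U I) : Prop :=
  G.O = H.O ∧ (∀ x ∈ G.O, ∀ y ∈ G.O, (G.inc x y ↔ H.inc x y)) ∧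
    ∀ x ∈ G.O, G.t x = H.t x

/-- Connectedness of the incidence graph of a geometry. -/
def GConnected : Prop :=
  ∀ x ∈ Γ.O, ∀ y ∈ Γ.O,
    Relation.ReflTransGen (fun a b => a ∈ Γ.O ∧ b ∈ Γ.O ∧ Γ.inc a b) x y

/-- Residual connectedness of a geometry over the typeset `K`. -/
def ResiduallyConnected (K : Set I) : Prop :=
  (∀ F, Γ.IsFlag F → 1 ≤ (K \ Γ.t '' F).ncard → (Γ.Res F).O.Nonempty) ∧
  ∀ F, Γ.IsFlag F → 2 ≤ (K \ Γ.t '' F).ncard → (Γ.Res F).GConnected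

end IncGeom

open IncGeom

section Aux

variable {U : Type*} {I : Type*}

theorem geomEq_refl' (G : IncGeom U I) : geomEq G G :=
  ⟨rfl, fun _ _ _ _ => Iff.rfl, fun _ _ => rfl⟩

theorem geomEq_symm' {G H : IncGeom U I} (h : geomEq G H) : geomEq H G := by
  obtain ⟨hO, hinc, ht⟩ := h
  refine ⟨hO.symm, fun a ha b hb => ?_, fun a ha => ?_⟩
  · exact (hinc a (by rw [hO]; exact ha) b (by rw [hO]; exact hb)).symm
  · exact (ht a (by rw [hO]; exact ha)).symm

theorem geomEq_trans' {G H L : IncGeom U I} (h1 : geomEq G H) (h2 : geomEq H L) :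
    geomEq G L := by
  obtain ⟨hO, hinc, ht⟩ := h1
  obtain ⟨hO', hinc', ht'⟩ := h2
  refine ⟨hO.trans hO', fun a ha b hb => ?_, fun a ha => ?_⟩
  · exact (hinc a ha b hb).trans (hinc' a (by rw [← hO]; exact ha) b (by rw [← hO]; exact hb))
  · exact (ht a ha).trans (ht' a (by rw [← hO]; exact ha))

theorem res_res' (G : IncGeom U I) (A B : Set U) :
    (G.Res A).Res B = G.Res (A ∪ B) := by
  unfold IncGeom.Res
  congr 1
  ext w
  simp only [Set.mem_setOf_eq, Set.mem_union]
  constructor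
  · rintro ⟨⟨h1, h2, h3⟩, h4, h5⟩
    exact ⟨h1, fun h => h.elim h2 h4, fun f hf => hf.elim (h3 f) (h5 f)⟩
  · rintro ⟨h1, h2, h3⟩
    exact ⟨⟨h1, fun h => h2 (Or.inl h), fun f hf => h3 f (Or.inl hf)⟩,
      fun h => h2 (Or.inr h), fun f hf => h3 f (Or.inr hf)⟩

theorem trunc_res' (G : IncGeom U I) (J : Set I) (A : Set U) :
    (G.Res A).Trunc J = (G.Trunc J).Res A := by
  unfold IncGeom.Res IncGeom.Trunc
  congr 1
  ext w
  simp only [Set.mem_setOf_eq]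
  tauto

theorem geomEq_res' {G H : IncGeom U I} (h : geomEq G H) {A : Set U}
    (hA : ∀ f ∈ A, f ∈ G.O) : geomEq (G.Res A) (H.Res A) := by
  obtain ⟨hO, hinc, ht⟩ := h
  have key : (G.Res A).O = (H.Res A).O := by
    ext w
    constructor
    · rintro ⟨h1, h2, h3⟩
      exact ⟨by rw [← hO]; exact h1, h2,
        fun f hf => (hinc w h1 f (hA f hf)).1 (h3 f hf)⟩
    · rintro ⟨h1, h2, h3⟩
      have h1' : w ∈ G.O := by rw [hO]; exact h1
      exact ⟨h1', h2, fun f hf => (hinc w h1' f (hA f hf)).2 (h3 f hf)⟩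
  refine ⟨key, fun a ha b hb => ?_, fun a ha => ?_⟩
  · obtain ⟨ha1, -, -⟩ := ha
    obtain ⟨hb1, -, -⟩ := hb
    exact hinc a ha1 b hb1
  · obtain ⟨ha1, -, -⟩ := ha
    exact ht a ha1

theorem geomEq_res_empty' (G : IncGeom U I) : geomEq (G.Res ∅) G := by
  refine ⟨?_, fun _ _ _ _ => Iff.rfl, fun _ _ => rfl⟩
  ext w
  simp [IncGeom.Res]

end Aux

/-- Ellard–Shult extension lemma: a sheaf defined over the nonempty
flags of rank at most two of a locally truncated geometry `Γ` over `K`, `|K| > 3`,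
extends to a sheaf over all nonempty flags, with `Sh'(F) = Res_{Σ(x)}(F \ {x})`
independent of the choice of `x ∈ F`. -/
theorem stmt_14 {U : Type*} {I : Type*}
    (K J : Set I) (hKJ : Disjoint K J) (hK : 3 < K.ncard)
    (Γ : IncGeom U I)
    (hΓtypes : ∀ x ∈ Γ.O, Γ.t x ∈ K)
    (hRC : Γ.ResiduallyConnected K)
    (Sh : Set U → IncGeom U I)
    (hShtrunc : ∀ F, Γ.IsFlag F → F.Nonempty → F.ncard ≤ 2 →
      geomEq ((Sh F).Trunc J) (Γ.Res F))
    (hShconn : ∀ F₁ F₂, Γ.IsFlag F₁ → Γ.IsFlag F₂ → F₁.Nonempty →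
      F₁ ⊆ F₂ → F₂.ncard ≤ 2 → geomEq (Sh F₂) ((Sh F₁).Res (F₂ \ F₁))) :
    ∃ Sh' : Set U → IncGeom U I,
      (∀ x : U, Γ.IsFlag {x} → geomEq (Sh' {x}) (Sh {x})) ∧
      (∀ F, Γ.IsFlag F → F.Nonempty → geomEq ((Sh' F).Trunc J) (Γ.Res F)) ∧
      (∀ F₁ F₂, Γ.IsFlag F₁ → Γ.IsFlag F₂ → F₁.Nonempty → F₁ ⊆ F₂ →
        geomEq (Sh' F₂) ((Sh' F₁).Res (F₂ \ F₁))) ∧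
      (∀ F, Γ.IsFlag F → F.Nonempty → ∀ x ∈ F,
        geomEq (Sh' F) ((Sh {x}).Res (F \ {x}))) := by
  classical
  -- subflags of flags are flags
  have flag_mono : ∀ {F F' : Set U}, F' ⊆ F → Γ.IsFlag F → Γ.IsFlag F' := by
    rintro F F' hs ⟨h1, h2⟩
    exact ⟨hs.trans h1, fun a ha b hb => h2 a (hs ha) b (hs hb)⟩
  -- elements of a flag lie in the residue of any other element
  have memRes : ∀ {F : Set U}, Γ.IsFlag F → ∀ x ∈ F, ∀ f ∈ F, f ≠ x →
      f ∈ (Γ.Res {x}).O := by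
    intro F hF x hx f hf hfx
    refine ⟨hF.1 hf, by simpa using hfx, fun g hg => ?_⟩
    rw [Set.mem_singleton_iff] at hg
    rw [hg]
    exact hF.2 f hf x hx
  -- the truncation axiom for singletons
  have TA : ∀ x : U, Γ.IsFlag {x} → geomEq ((Sh {x}).Trunc J) (Γ.Res {x}) := by
    intro x hx
    exact hShtrunc {x} hx ⟨x, rfl⟩ (by simp)
  have memSh : ∀ x : U, Γ.IsFlag {x} → ∀ f ∈ (Γ.Res {x}).O, f ∈ (Sh {x}).O := by
    intro x hx f hf
    have h1 := (TA x hx).1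
    have hf' : f ∈ ((Sh {x}).Trunc J).O := by rw [h1]; exact hf
    exact hf'.1
  have incSh : ∀ x : U, Γ.IsFlag {x} → ∀ f ∈ (Γ.Res {x}).O, ∀ g ∈ (Γ.Res {x}).O,
      ((Sh {x}).inc f g ↔ Γ.inc f g) := by
    intro x hx f hf g hg
    obtain ⟨hO, hinc, ht⟩ := TA x hx
    exact hinc f (by rw [hO]; exact hf) g (by rw [hO]; exact hg)
  have tSh : ∀ x : U, Γ.IsFlag {x} → ∀ f ∈ (Γ.Res {x}).O, (Sh {x}).t f = Γ.t f := by
    intro x hx f hf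
    obtain ⟨hO, hinc, ht⟩ := TA x hx
    exact ht f (by rw [hO]; exact hf)
  -- the key comparison between Sh {x} and Sh {x, y}
  have L1 : ∀ F : Set U, Γ.IsFlag F → ∀ x ∈ F, ∀ y ∈ F, x ≠ y →
      geomEq ((Sh {x}).Res (F \ {x})) ((Sh {x, y}).Res (F \ {x, y})) := by
    intro F hF x hx y hy hxy
    have hfx : Γ.IsFlag {x} := flag_mono (Set.singleton_subset_iff.2 hx) hF
    have hfxy : Γ.IsFlag {x, y} := flag_mono
      (Set.insert_subset_iff.2 ⟨hx, Set.singleton_subset_iff.2 hy⟩) hF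
    have P := hShconn {x} {x, y} hfx hfxy ⟨x, rfl⟩
      (Set.singleton_subset_iff.2 (Set.mem_insert x _))
      (le_trans (Set.ncard_insert_le _ _) (by simp))
    have pd : ({x, y} : Set U) \ {x} = {y} := by
      ext z
      simp only [Set.mem_diff, Set.mem_insert_iff, Set.mem_singleton_iff]
      constructor
      · rintro ⟨h | h, h2⟩
        · exact absurd h h2
        · exact h
      · rintro rfl
        exact ⟨Or.inr rfl, fun h => hxy h.symm⟩
    rw [pd] at P
    obtain ⟨PO, Pinc, Pt⟩ := P
    have hyRes : y ∈ (Γ.Res {x}).O := memRes hF x hx y hy (fun h => hxy h.symm)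
    have memXY : ∀ f ∈ F, f ≠ x → f ≠ y → f ∈ (Sh {x, y}).O := by
      intro f hf hfx' hfy
      rw [PO]
      have hfRes : f ∈ (Γ.Res {x}).O := memRes hF x hx f hf hfx'
      refine ⟨memSh x hfx f hfRes, by simpa using hfy, fun g hg => ?_⟩
      rw [Set.mem_singleton_iff] at hg
      rw [hg]
      exact (incSh x hfx f hfRes y hyRes).2 (hF.2 f hf y hy)
    have hOeq : ((Sh {x}).Res (F \ {x})).O = ((Sh {x, y}).Res (F \ {x, y})).O := by
      ext w
      constructor
      · rintro ⟨hw1, hw2, hw3⟩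
        have hwy : w ≠ y := by
          rintro rfl
          exact hw2 ⟨hy, by simp only [Set.mem_singleton_iff]; exact fun h => hxy h.symm⟩
        have hwXY : w ∈ (Sh {x, y}).O := by
          rw [PO]
          refine ⟨hw1, by simpa using hwy, fun g hg => ?_⟩
          rw [Set.mem_singleton_iff] at hg
          rw [hg]
          exact hw3 y ⟨hy, by simp only [Set.mem_singleton_iff]; exact fun h => hxy h.symm⟩
        refine ⟨hwXY, ?_, ?_⟩
        · rintro ⟨hwF, hwp⟩
          refine hw2 ⟨hwF, ?_⟩
          simp only [Set.mem_singleton_iff]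
          intro h
          exact hwp (Set.mem_insert_iff.2 (Or.inl h))
        · rintro f ⟨hfF, hfp⟩
          have hfx' : f ≠ x := fun h => hfp (Set.mem_insert_iff.2 (Or.inl h))
          have hfy : f ≠ y := fun h => hfp (Set.mem_insert_iff.2 (Or.inr (by simp [h])))
          have hfXY := memXY f hfF hfx' hfy
          exact (Pinc w hwXY f hfXY).2
            (hw3 f ⟨hfF, by simp only [Set.mem_singleton_iff]; exact hfx'⟩)
      · rintro ⟨hwO, hw2, hw3⟩
        have hwR : w ∈ ((Sh {x}).Res ({y} : Set U)).O := by rw [← PO]; exact hwO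
        obtain ⟨hw1, hwy, hwiy⟩ := hwR
        refine ⟨hw1, ?_, ?_⟩
        · rintro ⟨hwF, hwx⟩
          by_cases h : w = y
          · exact hwy (by simp [h])
          · refine hw2 ⟨hwF, ?_⟩
            simp only [Set.mem_insert_iff, Set.mem_singleton_iff]
            push_neg
            exact ⟨fun hh => hwx (by simp [hh]), h⟩
        · rintro f ⟨hfF, hfx'⟩
          by_cases h : f = y
          · subst h
            exact hwiy f rfl
          · have hfx'' : f ≠ x := by simpa using hfx'
            have hfXY := memXY f hfF hfx'' h
            refine (Pinc w hwO f hfXY).1 (hw3 f ⟨hfF, ?_⟩)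
            simp only [Set.mem_insert_iff, Set.mem_singleton_iff]
            push_neg
            exact ⟨hfx'', h⟩
    refine ⟨hOeq, ?_, ?_⟩
    · intro a ha b hb
      have ha2 : a ∈ ((Sh {x, y}).Res (F \ {x, y})).O := by rw [← hOeq]; exact ha
      have hb2 : b ∈ ((Sh {x, y}).Res (F \ {x, y})).O := by rw [← hOeq]; exact hb
      exact (Pinc a ha2.1 b hb2.1).symm
    · intro a ha
      have ha2 : a ∈ ((Sh {x, y}).Res (F \ {x, y})).O := by rw [← hOeq]; exact ha
      exact (Pt a ha2.1).symm
  -- independence of the choice of x ∈ F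
  have L2 : ∀ F : Set U, Γ.IsFlag F → ∀ x ∈ F, ∀ y ∈ F,
      geomEq ((Sh {x}).Res (F \ {x})) ((Sh {y}).Res (F \ {y})) := by
    intro F hF x hx y hy
    by_cases hxy : x = y
    · subst hxy
      exact geomEq_refl' _
    · have h1 := L1 F hF x hx y hy hxy
      have h2 := L1 F hF y hy x hx (Ne.symm hxy)
      rw [Set.pair_comm y x] at h2
      exact geomEq_trans' h1 (geomEq_symm' h2)
  refine ⟨fun F => if h : F.Nonempty then (Sh {h.some}).Res (F \ {h.some}) else Γ,
    ?_, ?_, ?_, ?_⟩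
  · -- value on singletons
    intro x hx
    have hne : ({x} : Set U).Nonempty := ⟨x, rfl⟩
    simp only [dif_pos hne]
    have hs : hne.some = x := hne.some_mem
    rw [hs, Set.diff_self]
    exact geomEq_res_empty' _
  · -- truncation condition
    intro F hF hne
    simp only [dif_pos hne]
    have hx : hne.some ∈ F := hne.some_mem
    have hfx : Γ.IsFlag {hne.some} := flag_mono (Set.singleton_subset_iff.2 hx) hF
    rw [trunc_res']
    have hA : ∀ f ∈ F \ ({hne.some} : Set U), f ∈ ((Sh {hne.some}).Trunc J).O := by
      rintro f ⟨hfF, hfx'⟩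
      rw [(TA hne.some hfx).1]
      exact memRes hF hne.some hx f hfF (by simpa using hfx')
    have h1 := geomEq_res' (TA hne.some hfx) hA
    have h2 : (Γ.Res {hne.some}).Res (F \ {hne.some}) = Γ.Res F := by
      rw [res_res']
      congr 1
      rw [Set.singleton_union, Set.insert_diff_singleton, Set.insert_eq_of_mem hx]
    rw [h2] at h1
    exact h1
  · -- connecting condition
    intro F₁ F₂ h1 h2 hne1 hsub
    have hne2 : F₂.Nonempty := hne1.mono hsub
    simp only [dif_pos hne1, dif_pos hne2]
    have ha : hne1.some ∈ F₂ := hsub hne1.some_mem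
    rw [res_res']
    have hset : (F₁ \ {hne1.some}) ∪ (F₂ \ F₁) = F₂ \ {hne1.some} := by
      ext w
      simp only [Set.mem_union, Set.mem_diff, Set.mem_singleton_iff]
      constructor
      · rintro (⟨hw1, hw2⟩ | ⟨hw1, hw2⟩)
        · exact ⟨hsub hw1, hw2⟩
        · exact ⟨hw1, fun h => hw2 (by rw [h]; exact hne1.some_mem)⟩
      · rintro ⟨hw1, hw2⟩
        by_cases h : w ∈ F₁
        · exact Or.inl ⟨h, hw2⟩
        · exact Or.inr ⟨hw1, h⟩
    rw [hset]
    exact L2 F₂ h2 hne2.some hne2.some_mem hne1.some ha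
  · -- independence of the choice of x
    intro F hF hne x hx
    simp only [dif_pos hne]
    exact L2 F hF hne.some hne.some_mem x hx
end
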